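/- arXiv:2306.12196 — 2 statements merged into one kernel-verified Lean document; each statement's English description precedes it below -/
import Mathlib

section
/- dt_k(x_1···x_k ⊕ x_{k+1}···x_{2k}) = 2·P·(1 − P), where P = ∏_{i=1}^k (1 − 1/2^i), for the Boolean function on F_2^n (n ≥ 2k) that is the sum of two monomials of degree k on disjoint variable sets. -/
open Finset

def testSum (n k : ℕ) (f : (Fin n → ZMod 2) → ZMod 2)
    (u0 : Fin n → ZMod 2) (u : Fin k → Fin n → ZMod 2) : ZMod 2 :=
  ∑ c : Fin k → ZMod 2, f (u0 + ∑ i, c i • u i)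

noncomputable def dt (n k : ℕ) (f : (Fin n → ZMod 2) → ZMod 2) : ℝ :=
  ((univ.filter (fun p : (Fin n → ZMod 2) × (Fin k → Fin n → ZMod 2) =>
      testSum n k f p.1 p.2 ≠ 0)).card : ℝ) / 2 ^ ((k + 1) * n)

def anf (n : ℕ) (f : (Fin n → ZMod 2) → ZMod 2) (a : Fin n → ZMod 2) : ZMod 2 :=
  ∑ x ∈ univ.filter (fun x : Fin n → ZMod 2 => ∀ i, (x i).val ≤ (a i).val), f x

def wt (n : ℕ) (a : Fin n → ZMod 2) : ℕ := (univ.filter fun i => a i = 1).card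

def degree (n : ℕ) (f : (Fin n → ZMod 2) → ZMod 2) : ℕ :=
  (univ.filter fun a => anf n f a ≠ 0).sup (wt n)

def monom (n : ℕ) (a : Fin n → ZMod 2) (x : Fin n → ZMod 2) : ZMod 2 :=
  ∏ i ∈ univ.filter (fun i => a i = 1), x i


/-! The test sum of the monomial `∏ⱼ x (e j)` at `(u₀, u)` is `∑_c ∏ⱼ (w + M c)ⱼ` for the `k × k`
matrix `M j i = u i (e j)`. If `M` is invertible, `c ↦ w + M c` is a bijection of `𝔽₂ᵏ` and only the
all-ones point contributes, so the sum is `1`; otherwise translating `c` by a kernel vector pairs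
up equal terms and the sum is `0`. For two monomials on disjoint variables the test sum is thus
nonzero iff exactly one of two blocks of the directions is invertible. These blocks are
independent uniform matrices, and a uniform `k × k` matrix over `𝔽₂` is invertible with
probability `P = ∏ᵢ (1 - 2⁻ⁱ)` (count `GL_k(𝔽₂)`), which gives `2 P (1 - P)`. -/

open Matrix

namespace Finset

variable {α β : Type*} [Fintype α] [Fintype β]

lemma dens_product (s : Finset α) (t : Finset β) : (s ×ˢ t).dens = s.dens * t.dens := by
  simp only [dens, card_product, Fintype.card_prod, Nat.cast_mul, mul_div_mul_comm]

lemma dens_filter_xor_mem [DecidableEq α] [Nonempty α] (s : Finset α) :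
    ((univ.filter fun q : α × α => Xor (q.1 ∈ s) (q.2 ∈ s)).dens : ℝ)
      = 2 * s.dens * (1 - s.dens) := by
  have hsplit : univ.filter (fun q : α × α => Xor (q.1 ∈ s) (q.2 ∈ s))
      = s ×ˢ sᶜ ∪ sᶜ ×ˢ s := by
    ext ⟨a, b⟩
    rw [mem_filter]
    simp only [Xor, mem_univ, true_and, mem_union, mem_product, mem_compl]
    tauto
  have hdisj : Disjoint (s ×ˢ sᶜ) (sᶜ ×ˢ s) := disjoint_product.2 (Or.inl disjoint_compl_right)
  have hcompl : (sᶜ.dens : ℝ) = 1 - s.dens := by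
    have : s.dens + sᶜ.dens = 1 := by
      rw [← dens_union_of_disjoint disjoint_compl_right, union_compl, dens_univ]
    rw [eq_sub_iff_add_eq', ← NNRat.cast_add, this, NNRat.cast_one]
  rw [hsplit, dens_union_of_disjoint hdisj, dens_product, dens_product, NNRat.cast_add,
    NNRat.cast_mul, NNRat.cast_mul, hcompl]
  ring

end Finset

lemma AddMonoidHom.dens_filter_comp_of_surjective {A B : Type*} [AddGroup A] [AddMonoid B]
    [Fintype A] [Fintype B] [DecidableEq B] (φ : A →+ B) (hφ : Function.Surjective φ)
    (P : B → Prop) [DecidablePred P] :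
    (univ.filter fun a => P (φ a)).dens = (univ.filter P).dens := by
  set c := #{a | φ a = 0}
  have hfiber : ∀ b, #{a | φ a = b} = c := fun b =>
    AddMonoidHom.card_fiber_eq_of_mem_range φ (hφ b) (hφ 0)
  have hc : c ≠ 0 := card_ne_zero.2 ⟨0, by simp⟩
  have hA : Fintype.card A = Fintype.card B * c := by
    rw [← card_univ, card_eq_sum_card_fiberwise (f := φ) (t := univ) fun _ _ => mem_univ _]
    simp [hfiber]
  have hP : #{a | P (φ a)} = #{b | P b} * c := by
    rw [card_eq_sum_card_fiberwise (f := φ) (t := univ.filter P) fun a ha => by simpa using ha,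
      ← smul_eq_mul, ← sum_const]
    refine sum_congr rfl fun b hb => ?_
    rw [filter_filter, ← hfiber b]
    congr 1
    ext a
    simp only [mem_filter, mem_univ, true_and] at hb ⊢
    exact ⟨And.right, fun h => ⟨h ▸ hb, h⟩⟩
  rw [dens, dens, hA, hP, Nat.cast_mul, Nat.cast_mul, mul_div_mul_right _ _ (by exact_mod_cast hc)]

lemma prod_pow_sub_pow_div_pow (q k : ℕ) (hq : q ≠ 0) :
    (∏ i : Fin k, ((q ^ k - q ^ (i : ℕ) : ℕ) : ℝ)) / ((q : ℝ) ^ k) ^ k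
      = ∏ i ∈ Icc 1 k, (1 - 1 / (q : ℝ) ^ i) := by
  have hfactor : ∀ i < k,
      ((q ^ k - q ^ i : ℕ) : ℝ) / (q : ℝ) ^ k = 1 - 1 / (q : ℝ) ^ (k - i) := by
    intro i hi
    rw [Nat.cast_sub (Nat.pow_le_pow_right (Nat.pos_of_ne_zero hq) hi.le), Nat.cast_pow,
      Nat.cast_pow, ← pow_sub_mul_pow (q : ℝ) hi.le]
    field_simp
  rw [← Fin.prod_const k ((q : ℝ) ^ k), ← prod_div_distrib,
    Fin.prod_univ_eq_prod_range (fun i => ((q ^ k - q ^ i : ℕ) : ℝ) / (q : ℝ) ^ k),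
    prod_congr rfl fun i hi => hfactor i (mem_range.1 hi), range_eq_Ico,
    prod_Ico_reflect (fun i => 1 - 1 / (q : ℝ) ^ i) 0 k.le_succ, Nat.add_sub_cancel_left,
    Nat.sub_zero]
  rfl

lemma Matrix.dens_det_ne_zero (𝔽 : Type*) [Field 𝔽] [Fintype 𝔽] [DecidableEq 𝔽] (k : ℕ) :
    ((univ.filter fun M : Matrix (Fin k) (Fin k) 𝔽 => M.det ≠ 0).dens : ℝ)
      = ∏ i ∈ Icc 1 k, (1 - 1 / (Fintype.card 𝔽 : ℝ) ^ i) := by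
  let e : {M : Matrix (Fin k) (Fin k) 𝔽 // M.det ≠ 0} ≃ GL (Fin k) 𝔽 :=
    { toFun M := GeneralLinearGroup.mk'' M.1 (isUnit_iff_ne_zero.2 M.2)
      invFun g := ⟨g, isUnit_iff_ne_zero.1 (isUnits_det_units g)⟩
      left_inv _ := rfl
      right_inv _ := Units.ext rfl }
  have hcard : #{M : Matrix (Fin k) (Fin k) 𝔽 | M.det ≠ 0}
      = ∏ i : Fin k, (Fintype.card 𝔽 ^ k - Fintype.card 𝔽 ^ (i : ℕ)) := by
    rw [← Fintype.card_subtype, ← Nat.card_eq_fintype_card, Nat.card_congr e, card_GL_field]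
  have hcardM : Fintype.card (Matrix (Fin k) (Fin k) 𝔽) = (Fintype.card 𝔽 ^ k) ^ k := by
    rw [← Fintype.card_congr of]
    simp
  rw [nnratCast_dens, hcard, Nat.cast_prod, hcardM, Nat.cast_pow, Nat.cast_pow,
    prod_pow_sub_pow_div_pow _ _ Fintype.card_ne_zero]

section CharTwo

variable {ι : Type*} [Fintype ι] [DecidableEq ι]

lemma ZMod.sum_prod_eq_one : ∑ y : ι → ZMod 2, ∏ j, y j = 1 := by
  have h : ∀ a : ZMod 2, a ≠ 1 → a = 0 := by decide
  rw [Fintype.sum_eq_single 1 fun y hy => ?_]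
  · simp
  obtain ⟨j, hj⟩ := Function.ne_iff.1 hy
  exact prod_eq_zero (mem_univ j) (h _ hj)

lemma Matrix.sum_comp_add_mulVec_of_det_ne_zero {K β : Type*} [Field K] [Fintype K]
    [AddCommMonoid β] (g : (ι → K) → β) (w : ι → K) {M : Matrix ι ι K} (hM : M.det ≠ 0) :
    ∑ c, g (w + M *ᵥ c) = ∑ y, g y := by
  have hinj : Function.Injective M.mulVec :=
    mulVec_injective_iff_isUnit.2 ((isUnit_iff_isUnit_det M).2 (isUnit_iff_ne_zero.2 hM))
  exact Fintype.sum_bijective _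
    (Finite.injective_iff_bijective.1 ((add_right_injective w).comp hinj)) _ _ fun _ => rfl

lemma Matrix.sum_comp_add_mulVec_of_det_eq_zero (g : (ι → ZMod 2) → ZMod 2) (w : ι → ZMod 2)
    {M : Matrix ι ι (ZMod 2)} (hM : M.det = 0) : ∑ c, g (w + M *ᵥ c) = 0 := by
  obtain ⟨c₀, hc₀, hMc₀⟩ := exists_mulVec_eq_zero_iff.2 hM
  have hcancel : ∀ c : ι → ZMod 2, c + c₀ + c₀ = c := fun c => by
    ext i; exact CharTwo.add_cancel_right _ _
  refine sum_involution (fun c _ => c + c₀) (fun c _ => ?_) (fun c _ _ => ?_)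
    (fun c _ => mem_univ _) (fun c _ => hcancel c)
  · rw [mulVec_add, hMc₀, add_zero, CharTwo.add_self_eq_zero]
  · exact fun h => hc₀ (by simpa using h)

lemma Matrix.sum_prod_add_mulVec (w : ι → ZMod 2) (M : Matrix ι ι (ZMod 2)) :
    ∑ c, ∏ j, (w + M *ᵥ c) j = if M.det ≠ 0 then 1 else 0 := by
  split_ifs with hM
  · rw [sum_comp_add_mulVec_of_det_ne_zero (fun y => ∏ j, y j) w hM, ZMod.sum_prod_eq_one]
  · exact sum_comp_add_mulVec_of_det_eq_zero _ w (not_not.1 hM)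

lemma ZMod.ite_add_ite_ne_zero (p q : Prop) [Decidable p] [Decidable q] :
    ((if p then 1 else 0) + (if q then 1 else 0) : ZMod 2) ≠ 0 ↔ Xor p q := by
  by_cases hp : p <;> by_cases hq : q <;> simp [hp, hq, Xor, CharTwo.add_self_eq_zero]

end CharTwo

section TestSum

variable {n k : ℕ}

@[simps]
def directionMatrix (e : Fin k → Fin n) :
    (Fin k → Fin n → ZMod 2) →+ Matrix (Fin k) (Fin k) (ZMod 2) where
  toFun u := of fun j i => u i (e j)
  map_zero' := rfl
  map_add' _ _ := rfl

lemma testSum_add (f g : (Fin n → ZMod 2) → ZMod 2) (u0 : Fin n → ZMod 2)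
    (u : Fin k → Fin n → ZMod 2) :
    testSum n k (fun x => f x + g x) u0 u = testSum n k f u0 u + testSum n k g u0 u :=
  sum_add_distrib

lemma testSum_monomial (e : Fin k → Fin n) (u0 : Fin n → ZMod 2) (u : Fin k → Fin n → ZMod 2) :
    testSum n k (fun x => ∏ j, x (e j)) u0 u
      = if (directionMatrix e u).det ≠ 0 then 1 else 0 := by
  rw [← sum_prod_add_mulVec (u0 ∘ e)]
  refine sum_congr rfl fun c _ => prod_congr rfl fun j _ => ?_
  simp [mulVec, dotProduct, Finset.sum_apply, mul_comm]

lemma testSum_monomial_add_monomial_ne_zero (e₁ e₂ : Fin k → Fin n) (u0 : Fin n → ZMod 2)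
    (u : Fin k → Fin n → ZMod 2) :
    testSum n k (fun x => (∏ j, x (e₁ j)) + ∏ j, x (e₂ j)) u0 u ≠ 0 ↔
      Xor ((directionMatrix e₁ u).det ≠ 0) ((directionMatrix e₂ u).det ≠ 0) := by
  rw [testSum_add, testSum_monomial, testSum_monomial, ZMod.ite_add_ite_ne_zero]

lemma directionMatrix_prod_surjective {e₁ e₂ : Fin k → Fin n}
    (he : Function.Injective (Sum.elim e₁ e₂)) :
    Function.Surjective ((directionMatrix e₁).prod (directionMatrix e₂)) := by
  rintro ⟨M, N⟩
  refine ⟨fun i => Function.extend (Sum.elim e₁ e₂) (Sum.elim (fun j => M j i) (fun j => N j i)) 0,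
    Prod.ext (ext fun j i => ?_) (ext fun j i => ?_)⟩
  · exact he.extend_apply _ _ (Sum.inl j)
  · exact he.extend_apply _ _ (Sum.inr j)

lemma dt_eq_dens (f : (Fin n → ZMod 2) → ZMod 2) :
    dt n k f = ((univ.filter fun p : (Fin n → ZMod 2) × (Fin k → Fin n → ZMod 2) =>
      testSum n k f p.1 p.2 ≠ 0).dens : ℝ) := by
  rw [dt, nnratCast_dens]
  congr 1
  simp only [Fintype.card_prod, Fintype.card_pi, ZMod.card, prod_const, card_univ,
    Fintype.card_fin]
  push_cast
  ring

end TestSum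

theorem dt_two_monomials (n k : ℕ) (h : 2 * k ≤ n) :
    dt n k (fun x =>
        (∏ j : Fin k, x ((Fin.castAdd k j).castLE (by omega : k + k ≤ n))) +
        ∏ j : Fin k, x ((Fin.natAdd k j).castLE (by omega : k + k ≤ n)))
      = 2 * (∏ i ∈ Icc 1 k, (1 - 1 / 2 ^ i : ℝ)) *
          (1 - ∏ i ∈ Icc 1 k, (1 - 1 / 2 ^ i : ℝ)) := by
  have hkn : k + k ≤ n := by omega
  set e₁ : Fin k → Fin n := fun j => (Fin.castAdd k j).castLE hkn
  set e₂ : Fin k → Fin n := fun j => (Fin.natAdd k j).castLE hkn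
  have he : Function.Injective (Sum.elim e₁ e₂) := by
    have : Sum.elim e₁ e₂ = Fin.castLE hkn ∘ finSumFinEquiv := by ext (j | j) <;> rfl
    rw [this]
    exact (Fin.castLE_injective hkn).comp finSumFinEquiv.injective
  set φ := (directionMatrix e₁).prod (directionMatrix e₂)
  set S := univ.filter fun M : Matrix (Fin k) (Fin k) (ZMod 2) => M.det ≠ 0
  have hfilter : univ.filter (fun p : (Fin n → ZMod 2) × (Fin k → Fin n → ZMod 2) =>
      testSum n k (fun x => (∏ j, x (e₁ j)) + ∏ j, x (e₂ j)) p.1 p.2 ≠ 0)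
      = univ ×ˢ univ.filter (fun u => Xor ((φ u).1 ∈ S) ((φ u).2 ∈ S)) := by
    ext ⟨u0, u⟩
    simp [testSum_monomial_add_monomial_ne_zero, S, φ]
  rw [dt_eq_dens, hfilter, dens_product, dens_univ, one_mul,
    φ.dens_filter_comp_of_surjective (directionMatrix_prod_surjective he)
      fun q => Xor (q.1 ∈ S) (q.2 ∈ S),
    dens_filter_xor_mem, dens_det_ne_zero]
  simp
end

section
/- For any f : F_2^n → F_2 of degree exactly k, dt_k(f) = add_k(f) · ∏_{i=n−k+1}^{n} (1 − 1/2^i), where add_k(f) is the average degree-k monomial density of f over its affine equivalence class. -/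
open Finset

noncomputable def dd (n k : ℕ) (g : (Fin n → ZMod 2) → ZMod 2) : ℝ :=
  ((univ.filter fun a : Fin n → ZMod 2 => wt n a = k ∧ anf n g a ≠ 0).card : ℝ) / n.choose k

open scoped Classical in
noncomputable def addk (n k : ℕ) (f : (Fin n → ZMod 2) → ZMod 2) : ℝ :=
  (∑ M ∈ univ.filter (fun M : Matrix (Fin n) (Fin n) (ZMod 2) => IsUnit M.det),
      ∑ v : Fin n → ZMod 2, dd n k (fun x => f (M.mulVec x + v))) /
    ((univ.filter (fun M : Matrix (Fin n) (Fin n) (ZMod 2) => IsUnit M.det)).card * 2 ^ n)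


/-!
The ANF coefficient of `f ∘ (x ↦ M x + v)` at a monomial of degree `k` is the `k`-th order
derivative of `f` at `v` in the directions of the corresponding `k` columns of `M`. Such a
derivative vanishes unless the directions are linearly independent, and as `M` runs over
`GL(n, 𝔽₂)` the `k` columns in fixed positions run uniformly over the independent `k`-tuples
(left multiplication acts transitively on them and permutes the fibres). Hence `add_k(f)` is
the probability that the test rejects given independent directions, while `dt_k(f)` is that
probability times the probability `∏_{i=n-k+1}^{n} (1 - 2^{-i})` that `k` random vectors are
independent.
-/

open Matrix

theorem Matrix.col_mul {R l m n : Type*} [Fintype m] [NonUnitalNonAssocSemiring R]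
    (A : Matrix l m R) (B : Matrix m n R) (j : n) : (A * B).col j = A *ᵥ B.col j := by
  ext i
  simp [Matrix.mul_apply, Matrix.mulVec, dotProduct]

theorem Matrix.mulVec_extend_zero {R m ι κ : Type*} [CommSemiring R] [Fintype ι] [Fintype κ]
    (M : Matrix m ι R) {σ : κ → ι} (hσ : Function.Injective σ) (c : κ → R) :
    M *ᵥ Function.extend σ c 0 = ∑ j, c j • M.col (σ j) := by
  ext i
  simp only [mulVec, dotProduct, Finset.sum_apply, Pi.smul_apply, col_apply, smul_eq_mul]
  refine (Fintype.sum_of_injective σ hσ _ _ (fun l hl => ?_) fun j => ?_).symm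
  · simp [Function.extend_apply' _ _ _ hl]
  · rw [hσ.extend_apply, mul_comm]

theorem Module.Basis.sumExtend_inl {K V κ : Type*} [DivisionRing K] [AddCommGroup V]
    [Module K V] {u : κ → V} (hu : LinearIndependent K u) (j : κ) :
    sumExtend hu (Sum.inl j) = u j := by
  rw [sumExtend, reindex_apply, extend_apply_self]
  rfl

theorem prod_Icc_one_sub_one_div_pow {q : ℝ} (hq : q ≠ 0) {n k : ℕ} (hkn : k ≤ n) :
    ∏ i ∈ Icc (n - k + 1) n, (1 - 1 / q ^ i) =
      (∏ i ∈ range k, (q ^ n - q ^ i)) / q ^ (k * n) := by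
  have hreflect : ∏ i ∈ Icc (n - k + 1) n, (1 - 1 / q ^ i) =
      ∏ j ∈ range k, (1 - 1 / q ^ (n - j)) := by
    rw [range_eq_Ico, prod_Ico_reflect (fun i => 1 - 1 / q ^ i) 0 (by omega : k ≤ n + 1)]
    congr 1
    ext i
    simp only [mem_Icc, mem_Ico]
    omega
  have hfactor (j : ℕ) (hj : j ∈ range k) : 1 - 1 / q ^ (n - j) = (q ^ n - q ^ j) / q ^ n := by
    have hsplit : q ^ n = q ^ (n - j) * q ^ j := by
      rw [← pow_add, Nat.sub_add_cancel (by simp at hj; omega)]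
    rw [hsplit]
    field_simp
  rw [hreflect, prod_congr rfl hfactor, prod_div_distrib, prod_const, card_range, ← pow_mul,
    mul_comm n k]

section ColumnFamilies

variable {K ι κ : Type*} [Field K] [Fintype ι] [DecidableEq ι]

theorem linearIndependent_col_comp {M : Matrix ι ι K} (hM : IsUnit M.det) {σ : κ → ι}
    (hσ : Function.Injective σ) : LinearIndependent K (M.col ∘ σ) :=
  (linearIndependent_cols_iff_isUnit.2 ((isUnit_iff_isUnit_det M).2 hM)).comp σ hσ

variable [Fintype κ]

theorem exists_isUnit_det_col_comp_eq {σ : κ → ι} (hσ : Function.Injective σ)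
    {u : κ → ι → K} (hu : LinearIndependent K u) :
    ∃ M : Matrix ι ι K, IsUnit M.det ∧ M.col ∘ σ = u := by
  classical
  let b := Module.Basis.sumExtend hu
  have : Finite (κ ⊕ Module.Basis.sumExtendIndex hu) := Module.Finite.finite_basis b
  have : Finite (Module.Basis.sumExtendIndex hu) :=
    Finite.of_injective (Sum.inr : _ → κ ⊕ _) Sum.inr_injective
  have : Fintype (Module.Basis.sumExtendIndex hu) := Fintype.ofFinite _
  have hcard :
      Fintype.card (Module.Basis.sumExtendIndex hu) = Fintype.card ↥(Set.range σ)ᶜ := by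
    have h := Module.finrank_eq_card_basis b
    rw [Module.finrank_fintype_fun_eq_card, Fintype.card_sum] at h
    rw [Fintype.card_compl_set, Set.card_range_of_injective hσ]
    omega
  let e : κ ⊕ Module.Basis.sumExtendIndex hu ≃ ι :=
    ((Equiv.ofInjective σ hσ).sumCongr (Fintype.equivOfCardEq hcard)).trans (Equiv.Set.sumCompl _)
  refine ⟨Matrix.of fun i l => b.reindex e l i, ?_, ?_⟩
  · rw [← Matrix.isUnit_iff_isUnit_det, ← linearIndependent_cols_iff_isUnit]
    exact (b.reindex e).linearIndependent
  · funext j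
    have he : e.symm (σ j) = Sum.inl j := e.symm_apply_eq.2 (by simp [e])
    change b.reindex e (σ j) = u j
    rw [b.reindex_apply, he, Module.Basis.sumExtend_inl]

variable [Fintype K] [DecidableEq K]

theorem card_filter_col_comp_eq_mulVec_comp {P : Matrix ι ι K} (hP : IsUnit P.det)
    (σ : κ → ι) (u : κ → ι → K) :
    #{M : Matrix ι ι K | IsUnit M.det ∧ M.col ∘ σ = (P *ᵥ ·) ∘ u} =
      #{M : Matrix ι ι K | IsUnit M.det ∧ M.col ∘ σ = u} := by
  have hcol (A M : Matrix ι ι K) : (A * M).col ∘ σ = (A *ᵥ ·) ∘ (M.col ∘ σ) :=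
    funext fun j => Matrix.col_mul A M (σ j)
  refine card_nbij' (P⁻¹ * ·) (P * ·) (fun M hM => ?_) (fun M hM => ?_) (fun M _ => ?_)
    (fun M _ => ?_)
  · simp only [coe_filter, Set.mem_ofPred_eq, mem_univ, true_and] at hM ⊢
    refine ⟨by simpa [det_mul] using (isUnit_nonsing_inv_det P hP).mul hM.1, ?_⟩
    rw [hcol, hM.2]
    funext j
    simp [mulVec_mulVec, nonsing_inv_mul P hP]
  · simp only [coe_filter, Set.mem_ofPred_eq, mem_univ, true_and] at hM ⊢
    exact ⟨by simpa [det_mul] using hP.mul hM.1, by rw [hcol, hM.2]⟩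
  · simp [← Matrix.mul_assoc, mul_nonsing_inv P hP]
  · simp [← Matrix.mul_assoc, nonsing_inv_mul P hP]

theorem card_filter_col_comp_eq_of_linearIndependent {σ : κ → ι} (hσ : Function.Injective σ)
    {u : κ → ι → K} (hu : LinearIndependent K u) :
    #{M : Matrix ι ι K | IsUnit M.det ∧ M.col ∘ σ = u} =
      #{M : Matrix ι ι K | IsUnit M.det ∧ M.col ∘ σ = (1 : Matrix ι ι K).col ∘ σ} := by
  obtain ⟨P, hP, rfl⟩ := exists_isUnit_det_col_comp_eq hσ hu
  have hPcol : P.col ∘ σ = (P *ᵥ ·) ∘ ((1 : Matrix ι ι K).col ∘ σ) := by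
    funext j
    simp only [Function.comp_apply]
    rw [← Matrix.col_mul, Matrix.mul_one]
  rw [hPcol]
  exact card_filter_col_comp_eq_mulVec_comp hP σ _

variable [DecidableEq κ]

open scoped Classical

theorem sum_isUnit_det_col_comp {β : Type*} [AddCommMonoid β] {σ : κ → ι}
    (hσ : Function.Injective σ) (φ : (κ → ι → K) → β) :
    ∑ M : Matrix ι ι K with IsUnit M.det, φ (M.col ∘ σ) =
      #{M : Matrix ι ι K | IsUnit M.det ∧ M.col ∘ σ = (1 : Matrix ι ι K).col ∘ σ} •
        ∑ u : κ → ι → K with LinearIndependent K u, φ u := by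
  have hmaps : ∀ M ∈ ({M | IsUnit M.det} : Finset (Matrix ι ι K)),
      M.col ∘ σ ∈ ({u | LinearIndependent K u} : Finset (κ → ι → K)) := fun M hM => by
    simpa using linearIndependent_col_comp (mem_filter.1 hM).2 hσ
  rw [← sum_fiberwise_of_maps_to hmaps, smul_sum]
  refine sum_congr rfl fun u hu => ?_
  rw [sum_congr rfl fun M hM => by rw [(mem_filter.1 hM).2], sum_const, filter_filter,
    card_filter_col_comp_eq_of_linearIndependent hσ (mem_filter.1 hu).2]

theorem card_linearIndependent_smul_sum_isUnit_det_col_comp {β : Type*} [AddCommMonoid β]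
    {σ : κ → ι} (hσ : Function.Injective σ) (φ : (κ → ι → K) → β) :
    #{u : κ → ι → K | LinearIndependent K u} •
        ∑ M : Matrix ι ι K with IsUnit M.det, φ (M.col ∘ σ) =
      #{M : Matrix ι ι K | IsUnit M.det} •
        ∑ u : κ → ι → K with LinearIndependent K u, φ u := by
  have hcard := sum_isUnit_det_col_comp (K := K) (β := ℕ) hσ (fun _ => 1)
  simp only [sum_const, smul_eq_mul, mul_one] at hcard
  rw [sum_isUnit_det_col_comp hσ, hcard, smul_comm, mul_smul]

omit [DecidableEq K] in
theorem card_linearIndependent_pos {σ : κ → ι} (hσ : Function.Injective σ) :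
    0 < #{u : κ → ι → K | LinearIndependent K u} :=
  card_pos.2 ⟨(1 : Matrix ι ι K).col ∘ σ,
    mem_filter.2 ⟨mem_univ _, linearIndependent_col_comp (by simp) hσ⟩⟩

end ColumnFamilies

open scoped Classical in
theorem card_linearIndependent_div_card_pow {K ι : Type*} [Field K] [Fintype K] [Fintype ι]
    [DecidableEq ι] {k : ℕ} (hk : k ≤ Fintype.card ι) :
    (#{u : Fin k → ι → K | LinearIndependent K u} : ℝ) /
        (Fintype.card K : ℝ) ^ (k * Fintype.card ι) =
      ∏ i ∈ Icc (Fintype.card ι - k + 1) (Fintype.card ι),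
        (1 - 1 / (Fintype.card K : ℝ) ^ i) := by
  rw [prod_Icc_one_sub_one_div_pow (Nat.cast_ne_zero.2 Fintype.card_ne_zero) hk]
  congr 1
  have h := card_linearIndependent (K := K) (V := ι → K) (k := k)
    (by simpa [Module.finrank_fintype_fun_eq_card] using hk)
  rw [Nat.card_eq_fintype_card, Fintype.card_subtype, Module.finrank_fintype_fun_eq_card] at h
  rw [h, Nat.cast_prod, Fin.prod_univ_eq_prod_range
    (fun i => ((Fintype.card K ^ Fintype.card ι - Fintype.card K ^ i : ℕ) : ℝ))]
  refine prod_congr rfl fun i hi => ?_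
  rw [Nat.cast_sub (Nat.pow_le_pow_right Fintype.card_pos (by simp at hi; omega))]
  push_cast
  rfl

theorem ZMod.two_val_le_val_iff (z w : ZMod 2) : z.val ≤ w.val ↔ (w = 0 → z = 0) := by
  revert z w; decide

theorem ZMod.two_eq_zero_iff_ne_one (z : ZMod 2) : z = 0 ↔ z ≠ 1 := by
  revert z; decide

section BooleanFunctions

variable {n k : ℕ}

theorem testSum_eq_zero_of_not_linearIndependent (f : (Fin n → ZMod 2) → ZMod 2)
    (v : Fin n → ZMod 2) {u : Fin k → Fin n → ZMod 2} (hu : ¬LinearIndependent (ZMod 2) u) :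
    testSum n k f v u = 0 := by
  obtain ⟨g, hg, j, hj⟩ := Fintype.not_linearIndependent_iff.1 hu
  -- `c ↦ c + g` is a fixed-point-free involution preserving the summand, so terms cancel in pairs
  have hshift (c : Fin k → ZMod 2) : ∑ i, (c + g) i • u i = ∑ i, c i • u i := by
    simp [add_smul, sum_add_distrib, hg]
  refine sum_involution (fun c _ => c + g) (fun c _ => by rw [hshift, CharTwo.add_self_eq_zero])
    (fun c _ _ h => hj (by simpa using congrFun h j)) (fun _ _ => mem_univ _) (fun c _ => ?_)
  funext i
  simp [add_assoc, CharTwo.add_self_eq_zero]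

theorem testSum_eq_zero_of_lt (hnk : n < k) (f : (Fin n → ZMod 2) → ZMod 2)
    (v : Fin n → ZMod 2) (u : Fin k → Fin n → ZMod 2) : testSum n k f v u = 0 :=
  testSum_eq_zero_of_not_linearIndependent f v fun hu => by
    have := hu.fintype_card_le_finrank
    simp only [Fintype.card_fin, Module.finrank_fin_fun] at this
    omega

theorem anf_comp_affine_eq_testSum (f : (Fin n → ZMod 2) → ZMod 2)
    (M : Matrix (Fin n) (Fin n) (ZMod 2)) (v : Fin n → ZMod 2) {a : Fin n → ZMod 2}
    {σ : Fin k → Fin n} (hσ : Function.Injective σ)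
    (ha : ∀ i, a i = 0 ↔ i ∉ Set.range σ) :
    anf n (fun x => f (M *ᵥ x + v)) a = testSum n k f v (M.col ∘ σ) := by
  have hmem (x : Fin n → ZMod 2) :
      (∀ i, (x i).val ≤ (a i).val) ↔ ∀ i ∉ Set.range σ, x i = 0 := by
    simp only [ZMod.two_val_le_val_iff, ha]
  have hext {x : Fin n → ZMod 2} (hx : ∀ i ∉ Set.range σ, x i = 0) :
      Function.extend σ (x ∘ σ) 0 = x := by
    funext i
    by_cases hi : i ∈ Set.range σ
    · obtain ⟨j, rfl⟩ := hi
      exact hσ.extend_apply _ _ j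
    · rw [Function.extend_apply' _ _ _ hi, hx i hi, Pi.zero_apply]
  refine sum_nbij' (· ∘ σ) (Function.extend σ · 0) (fun _ _ => mem_univ _) (fun c _ => ?_)
    (fun x hx => hext ((hmem x).1 (mem_filter.1 hx).2))
    (fun c _ => funext (hσ.extend_apply c 0)) (fun x hx => ?_)
  · exact mem_filter.2 ⟨mem_univ _, (hmem _).2 fun i hi => Function.extend_apply' _ _ _ hi⟩
  · have hMx : M *ᵥ x = ∑ j, (x ∘ σ) j • M.col (σ j) := by
      conv_lhs => rw [← hext ((hmem x).1 (mem_filter.1 hx).2)]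
      exact mulVec_extend_zero M hσ _
    rw [hMx, add_comm]
    rfl

theorem exists_injective_range_eq_support {a : Fin n → ZMod 2} (ha : wt n a = k) :
    ∃ σ : Fin k → Fin n, Function.Injective σ ∧ ∀ i, a i = 0 ↔ i ∉ Set.range σ := by
  have hs : #({i | a i = 1} : Finset (Fin n)) = k := ha
  refine ⟨_, (orderEmbOfFin _ hs).injective, fun i => ?_⟩
  rw [range_orderEmbOfFin]
  simp [ZMod.two_eq_zero_iff_ne_one]

theorem card_filter_wt_eq : #{a : Fin n → ZMod 2 | wt n a = k} = n.choose k := by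
  have hpowerset : #(powersetCard k (univ : Finset (Fin n))) = n.choose k := by simp
  rw [← hpowerset]
  refine card_nbij' (fun a => ({i | a i = 1} : Finset (Fin n)))
    (fun s i => if i ∈ s then 1 else 0) (fun a ha => ?_) (fun s hs => ?_) (fun a _ => ?_)
    (fun s _ => ?_)
  · rw [mem_coe, mem_filter] at ha
    exact mem_powersetCard.2 ⟨subset_univ _, ha.2⟩
  · refine mem_filter.2 ⟨mem_univ _, ?_⟩
    rw [← (mem_powersetCard.1 hs).2, wt]
    congr 1
    ext i
    simp
  · funext i
    by_cases h : a i = 1 <;> simp [h, (ZMod.two_eq_zero_iff_ne_one _).2]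
  · ext i
    simp

theorem dt_eq_zero_of_lt (hnk : n < k) (f : (Fin n → ZMod 2) → ZMod 2) : dt n k f = 0 := by
  simp [dt, testSum_eq_zero_of_lt hnk]

theorem addk_eq_zero_of_lt (hnk : n < k) (f : (Fin n → ZMod 2) → ZMod 2) : addk n k f = 0 := by
  simp [addk, dd, Nat.choose_eq_zero_of_lt hnk]

end BooleanFunctions

section AffineAverage

variable {n k : ℕ}

open scoped Classical

theorem card_linearIndependent_mul_card_anf_ne_zero (f : (Fin n → ZMod 2) → ZMod 2)
    {a : Fin n → ZMod 2} (ha : wt n a = k) :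
    #{u : Fin k → Fin n → ZMod 2 | LinearIndependent (ZMod 2) u} *
        #{p ∈ ({M | IsUnit M.det} : Finset (Matrix (Fin n) (Fin n) (ZMod 2))) ×ˢ univ |
          anf n (fun x => f (p.1 *ᵥ x + p.2)) a ≠ 0} =
      #{M : Matrix (Fin n) (Fin n) (ZMod 2) | IsUnit M.det} *
        #{p : (Fin n → ZMod 2) × (Fin k → Fin n → ZMod 2) |
          testSum n k f p.1 p.2 ≠ 0} := by
  obtain ⟨σ, hσ, hσa⟩ := exists_injective_range_eq_support ha
  have hT : #{p ∈ ({M | IsUnit M.det} : Finset (Matrix (Fin n) (Fin n) (ZMod 2))) ×ˢ univ |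
        anf n (fun x => f (p.1 *ᵥ x + p.2)) a ≠ 0} =
      ∑ v, ∑ M : Matrix (Fin n) (Fin n) (ZMod 2) with IsUnit M.det,
        if testSum n k f v (M.col ∘ σ) ≠ 0 then 1 else 0 := by
    rw [card_filter, sum_product_right]
    simp only [anf_comp_affine_eq_testSum f _ _ hσ hσa]
  have hS :
      #{p : (Fin n → ZMod 2) × (Fin k → Fin n → ZMod 2) | testSum n k f p.1 p.2 ≠ 0} =
      ∑ v, ∑ u : Fin k → Fin n → ZMod 2 with LinearIndependent (ZMod 2) u,
        if testSum n k f v u ≠ 0 then 1 else 0 := by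
    rw [card_filter, Fintype.sum_prod_type]
    refine sum_congr rfl fun v _ => (sum_subset (subset_univ _) fun u _ hu => ?_).symm
    simp [testSum_eq_zero_of_not_linearIndependent f v (by simpa using hu)]
  rw [hT, hS, mul_sum, mul_sum]
  refine sum_congr rfl fun v _ => ?_
  convert card_linearIndependent_smul_sum_isUnit_det_col_comp hσ
    fun u => if testSum n k f v u ≠ 0 then 1 else 0 using 2 <;> exact (smul_eq_mul _ _).symm

theorem sum_card_anf_ne_zero_comm (f : (Fin n → ZMod 2) → ZMod 2) :
    ∑ M : Matrix (Fin n) (Fin n) (ZMod 2) with IsUnit M.det, ∑ v : Fin n → ZMod 2,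
        #{a | wt n a = k ∧ anf n (fun x => f (M *ᵥ x + v)) a ≠ 0} =
      ∑ a : Fin n → ZMod 2 with wt n a = k,
        #{p ∈ ({M | IsUnit M.det} : Finset (Matrix (Fin n) (Fin n) (ZMod 2))) ×ˢ univ |
          anf n (fun x => f (p.1 *ᵥ x + p.2)) a ≠ 0} := by
  rw [← sum_product'
    (f := fun M v => #{a | wt n a = k ∧ anf n (fun x => f (M *ᵥ x + v)) a ≠ 0})]
  simp only [← filter_filter]
  exact sum_card_bipartiteAbove_eq_sum_card_bipartiteBelow _

theorem addk_eq (f : (Fin n → ZMod 2) → ZMod 2) (hkn : k ≤ n) :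
    addk n k f =
      #{p : (Fin n → ZMod 2) × (Fin k → Fin n → ZMod 2) | testSum n k f p.1 p.2 ≠ 0} /
        (#{u : Fin k → Fin n → ZMod 2 | LinearIndependent (ZMod 2) u} * 2 ^ n) := by
  rw [addk]
  set I := #{u : Fin k → Fin n → ZMod 2 | LinearIndependent (ZMod 2) u}
  set G := #{M : Matrix (Fin n) (Fin n) (ZMod 2) | IsUnit M.det}
  set S := #{p : (Fin n → ZMod 2) × (Fin k → Fin n → ZMod 2) | testSum n k f p.1 p.2 ≠ 0}
  have hI : (I : ℝ) ≠ 0 :=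
    Nat.cast_ne_zero.2 (card_linearIndependent_pos (Fin.castLE_injective hkn)).ne'
  have hG : (G : ℝ) ≠ 0 := Nat.cast_ne_zero.2 (card_ne_zero.2 ⟨1, by simp⟩)
  have hC : (n.choose k : ℝ) ≠ 0 := Nat.cast_ne_zero.2 (Nat.choose_pos hkn).ne'
  have hT (a : Fin n → ZMod 2) (ha : a ∈ ({a | wt n a = k} : Finset _)) :
      (#{p ∈ ({M | IsUnit M.det} : Finset (Matrix (Fin n) (Fin n) (ZMod 2))) ×ˢ univ |
        anf n (fun x => f (p.1 *ᵥ x + p.2)) a ≠ 0} : ℝ) = G * S / I := by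
    rw [eq_div_iff hI, mul_comm]
    exact_mod_cast card_linearIndependent_mul_card_anf_ne_zero f (mem_filter.1 ha).2
  have hsum : ∑ M : Matrix (Fin n) (Fin n) (ZMod 2) with IsUnit M.det, ∑ v,
      dd n k (fun x => f (M *ᵥ x + v)) = G * S / I := by
    have hcomm := congrArg (Nat.cast : ℕ → ℝ) (sum_card_anf_ne_zero_comm (k := k) f)
    push_cast at hcomm
    simp only [dd, ← sum_div]
    rw [hcomm, sum_congr rfl hT, sum_const, card_filter_wt_eq, nsmul_eq_mul]
    field_simp
  rw [hsum]
  field_simp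

theorem card_linearIndependent_div_two_pow (hkn : k ≤ n) :
    (#{u : Fin k → Fin n → ZMod 2 | LinearIndependent (ZMod 2) u} : ℝ) / 2 ^ (k * n) =
      ∏ i ∈ Icc (n - k + 1) n, (1 - 1 / 2 ^ i : ℝ) := by
  simpa using card_linearIndependent_div_card_pow (K := ZMod 2) (ι := Fin n) (by simpa using hkn)

end AffineAverage

theorem dt_eq_addk_mul_prod_general (n k : ℕ) (f : (Fin n → ZMod 2) → ZMod 2) :
    dt n k f = addk n k f * ∏ i ∈ Icc (n - k + 1) n, (1 - 1 / 2 ^ i : ℝ) := by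
  rcases le_or_gt k n with hkn | hnk
  · have hI := card_linearIndependent_pos (K := ZMod 2) (Fin.castLE_injective hkn)
    rw [addk_eq f hkn, ← card_linearIndependent_div_two_pow hkn, dt]
    field_simp
    ring
  · rw [dt_eq_zero_of_lt hnk, addk_eq_zero_of_lt hnk, zero_mul]

theorem dt_eq_addk_mul_prod (n k : ℕ) (f : (Fin n → ZMod 2) → ZMod 2)
    (hdeg : degree n f = k) :
    dt n k f = addk n k f * ∏ i ∈ Icc (n - k + 1) n, (1 - 1 / 2 ^ i : ℝ) :=
  dt_eq_addk_mul_prod_general n k f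
end
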